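/- arXiv:2511.20443 — 2 statements merged into one kernel-verified Lean document; each statement's English description precedes it below -/
import Mathlib

section
/- Let σ = conv{x_0,...,x_n} be an n-simplex in ℝ^n contained in a set where g: ℝⁿ → ℝ is C² with all second partial derivatives bounded in absolute value by β. Then for any x ∈ σ with barycentric coordinates λ_0,...,λ_n, |g(x) - Σ_{j=0}^n λ_j g(x_j)| ≤ (1/2) β n Σ_{j=0}^n λ_j ‖x_j - x_0‖₂ (max_{k} ‖x_k - x_0‖₂ + ‖x_j - x_0‖₂). -/
open scoped BigOperators

open intervalIntegral Set in
lemma taylor1d (φ φ' φ'' : ℝ → ℝ) (M : ℝ)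
    (h1 : ∀ t ∈ Icc (0:ℝ) 1, HasDerivAt φ (φ' t) t)
    (h2 : ∀ t ∈ Icc (0:ℝ) 1, HasDerivAt φ' (φ'' t) t)
    (hc : ContinuousOn φ'' (Icc 0 1))
    (hM : ∀ t ∈ Icc (0:ℝ) 1, |φ'' t| ≤ M) :
    |φ 1 - φ 0 - φ' 0| ≤ M / 2 := by
  have hc1 : ContinuousOn φ' (Icc 0 1) := fun t ht =>
    ((h2 t ht).continuousAt).continuousWithinAt
  have step1 : ∀ t ∈ Icc (0:ℝ) 1, |φ' t - φ' 0| ≤ M * t := by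
    intro t ht
    have hsub : Set.uIcc (0:ℝ) t ⊆ Icc 0 1 := by
      rw [Set.uIcc_of_le ht.1]
      exact Icc_subset_Icc le_rfl ht.2
    have hint : IntervalIntegrable φ'' MeasureTheory.volume 0 t :=
      (hc.mono hsub).intervalIntegrable
    have heq := intervalIntegral.integral_eq_sub_of_hasDerivAt
      (fun s hs => h2 s (hsub hs)) hint
    rw [← heq]
    calc |∫ s in (0:ℝ)..t, φ'' s| ≤ M * |t - 0| := by
          rw [← Real.norm_eq_abs]
          apply intervalIntegral.norm_integral_le_of_norm_le_const
          intro s hs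
          rw [Set.uIoc_of_le ht.1] at hs
          exact hM s ⟨hs.1.le, hs.2.trans ht.2⟩
      _ = M * t := by rw [sub_zero, abs_of_nonneg ht.1]
  have hint1 : IntervalIntegrable φ' MeasureTheory.volume 0 1 := by
    apply ContinuousOn.intervalIntegrable
    rwa [Set.uIcc_of_le zero_le_one]
  have heq : φ 1 - φ 0 = ∫ t in (0:ℝ)..1, φ' t :=
    (intervalIntegral.integral_eq_sub_of_hasDerivAt (fun s hs => h1 s (by
      rwa [Set.uIcc_of_le zero_le_one] at hs)) hint1).symm
  have key : φ 1 - φ 0 - φ' 0 = ∫ t in (0:ℝ)..1, (φ' t - φ' 0) := by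
    rw [intervalIntegral.integral_sub hint1 intervalIntegrable_const, heq]
    simp
  rw [key]
  have hMt : IntervalIntegrable (fun t => M * t) MeasureTheory.volume 0 1 :=
    (continuous_const.mul continuous_id).intervalIntegrable 0 1
  have h3 : |∫ t in (0:ℝ)..1, (φ' t - φ' 0)| ≤ |∫ t in (0:ℝ)..1, M * t| := by
    rw [← Real.norm_eq_abs (∫ t in (0:ℝ)..1, (φ' t - φ' 0))]
    apply intervalIntegral.norm_integral_le_abs_of_norm_le _ hMt
    filter_upwards [MeasureTheory.ae_restrict_mem measurableSet_uIoc] with t ht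
    rw [Set.uIoc_of_le zero_le_one] at ht
    exact step1 t ⟨ht.1.le, ht.2⟩
  have h4 : (∫ t in (0:ℝ)..1, M * t) = M / 2 := by
    rw [intervalIntegral.integral_const_mul, integral_id]
    ring
  calc |∫ t in (0:ℝ)..1, (φ' t - φ' 0)| ≤ |∫ t in (0:ℝ)..1, M * t| := h3
    _ = |M / 2| := by rw [h4]
    _ = M / 2 := abs_of_nonneg (by
        have := (abs_nonneg (φ'' 0)).trans (hM 0 ⟨le_rfl, zero_le_one⟩); linarith)

open Set ContinuousLinearMap in
lemma second_deriv_bound (n : ℕ) (s : Set (EuclideanSpace ℝ (Fin n)))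
    (g : EuclideanSpace ℝ (Fin n) → ℝ)
    (hg : ContDiffOn ℝ 2 g s)
    (β : ℝ) (hβ0 : 0 ≤ β)
    (hβ : ∀ q r : Fin n, ∀ ξ ∈ s,
      |fderiv ℝ (fun z => fderiv ℝ g z (EuclideanSpace.single q 1)) ξ
        (EuclideanSpace.single r 1)| ≤ β)
    {ξ : EuclideanSpace ℝ (Fin n)} (hξ : ξ ∈ interior s)
    (v : EuclideanSpace ℝ (Fin n)) :
    |fderiv ℝ (fderiv ℝ g) ξ v v| ≤ β * n * ‖v‖^2 := by
  have hgS : ContDiffOn ℝ 2 g (interior s) := hg.mono interior_subset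
  have hf' : ContDiffOn ℝ 1 (fderiv ℝ g) (interior s) :=
    hgS.fderiv_of_isOpen isOpen_interior (by norm_num)
  have hf'd : DifferentiableAt ℝ (fderiv ℝ g) ξ :=
    (hf'.contDiffAt (isOpen_interior.mem_nhds hξ)).differentiableAt one_ne_zero
  set B := fderiv ℝ (fderiv ℝ g) ξ with hB
  have hβ' : ∀ q r : Fin n,
      |B (EuclideanSpace.single r 1) (EuclideanSpace.single q 1)| ≤ β := by
    intro q r
    have hcomp : HasFDerivAt
        (⇑(ContinuousLinearMap.apply ℝ ℝ (EuclideanSpace.single q 1)) ∘ fderiv ℝ g)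
        ((ContinuousLinearMap.apply ℝ ℝ (EuclideanSpace.single q 1)).comp B) ξ :=
      (ContinuousLinearMap.apply ℝ ℝ (EuclideanSpace.single q 1)).hasFDerivAt.comp ξ
        hf'd.hasFDerivAt
    have h2 := hβ q r ξ (interior_subset hξ)
    have heq : (fun z => fderiv ℝ g z (EuclideanSpace.single q 1)) =
        (⇑(ContinuousLinearMap.apply ℝ ℝ (EuclideanSpace.single q 1)) ∘ fderiv ℝ g) := rfl
    rw [heq, hcomp.fderiv] at h2
    exact h2
  have hv : v = ∑ r, v r • EuclideanSpace.single r 1 := by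
    ext i
    rw [WithLp.ofLp_sum, Finset.sum_apply]
    simp [EuclideanSpace.single_apply]
  have hexp : B v v = ∑ r, ∑ q, (v r * v q) * (B (EuclideanSpace.single q 1)
      (EuclideanSpace.single r 1)) := by
    conv_lhs => rw [hv]
    simp only [map_sum, map_smul, ContinuousLinearMap.sum_apply,
      ContinuousLinearMap.smul_apply, smul_eq_mul]
    exact Finset.sum_congr rfl fun r _ => by
      rw [Finset.mul_sum]
      exact Finset.sum_congr rfl fun q _ => by ring
  have habs : |B v v| ≤ β * (∑ q, |v q|)^2 := by
    rw [hexp]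
    calc |∑ r, ∑ q, (v r * v q) * B (EuclideanSpace.single q 1) (EuclideanSpace.single r 1)|
        ≤ ∑ r, ∑ q, |v r| * |v q| * β := by
          refine (Finset.abs_sum_le_sum_abs _ _).trans (Finset.sum_le_sum fun r _ => ?_)
          refine (Finset.abs_sum_le_sum_abs _ _).trans (Finset.sum_le_sum fun q _ => ?_)
          rw [abs_mul, abs_mul]
          exact mul_le_mul_of_nonneg_left (hβ' r q) (by positivity)
      _ = β * (∑ q, |v q|)^2 := by
          rw [sq, Finset.sum_mul_sum, Finset.mul_sum]
          exact Finset.sum_congr rfl fun r _ => by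
            rw [Finset.mul_sum]
            exact Finset.sum_congr rfl fun q _ => by ring
  refine habs.trans ?_
  have hcs : (∑ q, |v q|)^2 ≤ n * ‖v‖^2 := by
    have h1 := sq_sum_le_card_mul_sum_sq (s := (Finset.univ : Finset (Fin n)))
      (f := fun q => |v q|)
    simp only [Finset.card_univ, Fintype.card_fin] at h1
    refine h1.trans ?_
    have h2 : ‖v‖^2 = ∑ q, |v q|^2 := by
      rw [EuclideanSpace.norm_eq, Real.sq_sqrt (by positivity)]
      simp [Real.norm_eq_abs]
    rw [h2]
  calc β * (∑ q, |v q|)^2 ≤ β * (n * ‖v‖^2) := mul_le_mul_of_nonneg_left hcs hβ0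
    _ = β * n * ‖v‖^2 := by ring

open Set ContinuousLinearMap in
lemma taylor_remainder (n : ℕ) (s : Set (EuclideanSpace ℝ (Fin n))) (hconv : Convex ℝ s)
    (g : EuclideanSpace ℝ (Fin n) → ℝ) (hg : ContDiffOn ℝ 2 g s)
    (β : ℝ)
    (hβ2 : ∀ ξ ∈ interior s, ∀ v : EuclideanSpace ℝ (Fin n),
      |fderiv ℝ (fderiv ℝ g) ξ v v| ≤ β * n * ‖v‖^2)
    {u w : EuclideanSpace ℝ (Fin n)} (hu : u ∈ interior s) (hw : w ∈ interior s) :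
    |g w - g u - fderiv ℝ g u (w - u)| ≤ 1/2 * (β * n * ‖w - u‖^2) := by
  set v := w - u with hvdef
  set γ := fun t : ℝ => u + t • v with hγdef
  have hS : Convex ℝ (interior s) := hconv.interior
  have hγmem : ∀ t ∈ Icc (0:ℝ) 1, γ t ∈ interior s := by
    intro t ht
    have heq : γ t = (1 - t) • u + t • w := by
      simp only [hγdef, hvdef]
      module
    rw [heq]
    exact hS hu hw (by linarith [ht.2]) ht.1 (by ring)
  have hγd : ∀ t : ℝ, HasDerivAt γ v t := by
    intro t
    have := ((hasDerivAt_id t).smul_const v).const_add u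
    simpa [hγdef] using this
  have hgS : ContDiffOn ℝ 2 g (interior s) := hg.mono interior_subset
  have hCA : ∀ y ∈ interior s, ContDiffAt ℝ 2 g y := fun y hy =>
    hgS.contDiffAt (isOpen_interior.mem_nhds hy)
  have hgdiff : ∀ y ∈ interior s, HasFDerivAt g (fderiv ℝ g y) y := fun y hy =>
    ((hCA y hy).differentiableAt two_ne_zero).hasFDerivAt
  have hf' : ContDiffOn ℝ 1 (fderiv ℝ g) (interior s) :=
    hgS.fderiv_of_isOpen isOpen_interior (by norm_num)
  have hf'd : ∀ y ∈ interior s, HasFDerivAt (fderiv ℝ g) (fderiv ℝ (fderiv ℝ g) y) y :=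
    fun y hy => ((hf'.contDiffAt (isOpen_interior.mem_nhds hy)).differentiableAt
      one_ne_zero).hasFDerivAt
  have h1 : ∀ t ∈ Icc (0:ℝ) 1, HasDerivAt (fun t => g (γ t))
      (fderiv ℝ g (γ t) v) t := fun t ht =>
    (hgdiff (γ t) (hγmem t ht)).comp_hasDerivAt t (hγd t)
  have h2 : ∀ t ∈ Icc (0:ℝ) 1, HasDerivAt (fun t => fderiv ℝ g (γ t) v)
      (fderiv ℝ (fderiv ℝ g) (γ t) v v) t := by
    intro t ht
    have hψ : HasFDerivAt (fun z => fderiv ℝ g z v)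
        ((ContinuousLinearMap.apply ℝ ℝ v).comp (fderiv ℝ (fderiv ℝ g) (γ t))) (γ t) :=
      (ContinuousLinearMap.apply ℝ ℝ v).hasFDerivAt.comp (γ t) (hf'd (γ t) (hγmem t ht))
    have := hψ.comp_hasDerivAt t (hγd t)
    exact this
  have hγc : Continuous γ := by
    apply continuous_const.add
    exact continuous_id.smul continuous_const
  have hc : ContinuousOn (fun t => fderiv ℝ (fderiv ℝ g) (γ t) v v) (Icc (0:ℝ) 1) := by
    have hBcont : ContinuousOn (fderiv ℝ (fderiv ℝ g)) (interior s) :=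
      hf'.continuousOn_fderiv_of_isOpen isOpen_interior le_rfl
    have hcomp : ContinuousOn (fun t => fderiv ℝ (fderiv ℝ g) (γ t)) (Icc 0 1) :=
      hBcont.comp hγc.continuousOn hγmem
    have := (ContinuousLinearMap.apply ℝ ℝ v).continuous.comp_continuousOn
      ((ContinuousLinearMap.apply ℝ (EuclideanSpace ℝ (Fin n) →L[ℝ] ℝ) v).continuous.comp_continuousOn
        hcomp)
    exact this.congr fun t ht => rfl
  have hM : ∀ t ∈ Icc (0:ℝ) 1, |fderiv ℝ (fderiv ℝ g) (γ t) v v| ≤ β * n * ‖v‖^2 :=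
    fun t ht => hβ2 (γ t) (hγmem t ht) v
  have := taylor1d (fun t => g (γ t)) (fun t => fderiv ℝ g (γ t) v)
    (fun t => fderiv ℝ (fderiv ℝ g) (γ t) v v) (β * n * ‖v‖^2) h1 h2 hc hM
  have huw : u + (1:ℝ) • v = w := by rw [hvdef]; module
  have hu0 : u + (0:ℝ) • v = u := by module
  simp only [hγdef, huw, hu0] at this
  calc |g w - g u - fderiv ℝ g u v| ≤ (β * n * ‖v‖^2) / 2 := this
    _ = 1/2 * (β * n * ‖v‖^2) := by ring


set_option maxHeartbeats 2000000 in
open Set Finset in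
/-- Interpolation error bound on a simplex for a `C²` function with second
partials bounded by `β`. -/
theorem stmt7 (n : ℕ) (x : Fin (n + 1) → EuclideanSpace ℝ (Fin n))
    (hx : LinearIndependent ℝ (fun j : Fin n => x j.succ - x 0))
    (g : EuclideanSpace ℝ (Fin n) → ℝ)
    (hg : ContDiffOn ℝ 2 g (convexHull ℝ (Set.range x)))
    (β : ℝ)
    (hβ : ∀ q r : Fin n, ∀ ξ ∈ convexHull ℝ (Set.range x),
      |fderiv ℝ (fun z => fderiv ℝ g z (EuclideanSpace.single q 1)) ξ
        (EuclideanSpace.single r 1)| ≤ β)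
    (p : EuclideanSpace ℝ (Fin n)) (hp : p ∈ convexHull ℝ (Set.range x))
    (lam : Fin (n + 1) → ℝ)
    (hlam0 : ∀ j, 0 ≤ lam j) (hlam1 : ∑ j, lam j = 1)
    (hpl : p = ∑ j, lam j • x j) :
    |g p - ∑ j, lam j * g (x j)| ≤
      (1 / 2) * β * n *
        ∑ j, lam j * ‖x j - x 0‖ *
          ((Finset.univ.sup' Finset.univ_nonempty fun k : Fin (n + 1) => ‖x k - x 0‖) +
            ‖x j - x 0‖) := by
  classical
  rcases Nat.eq_zero_or_pos n with hn | hn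
  · subst hn
    haveI : Subsingleton (EuclideanSpace ℝ (Fin 0)) :=
      ⟨fun a b => by ext i; exact i.elim0⟩
    have hxp : ∀ j, x j = p := fun j => Subsingleton.elim _ _
    simp only [hxp]
    rw [← Finset.sum_mul, hlam1, one_mul, sub_self, abs_zero]
    norm_num
  -- main case
  set s := convexHull ℝ (Set.range x) with hs
  have hconv : Convex ℝ s := convex_convexHull ℝ _
  have hxs : ∀ j, x j ∈ s := fun j => subset_convexHull ℝ _ (Set.mem_range_self j)
  have q0 : Fin n := ⟨0, hn⟩
  haveI : Nonempty (Fin n) := ⟨q0⟩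
  have hβ0 : 0 ≤ β := (abs_nonneg _).trans (hβ q0 q0 (x 0) (hxs 0))
  have hβ2 : ∀ ξ ∈ interior s, ∀ v : EuclideanSpace ℝ (Fin n),
      |fderiv ℝ (fderiv ℝ g) ξ v v| ≤ β * n * ‖v‖^2 :=
    fun ξ hξ v => second_deriv_bound n s g hg β hβ0 hβ hξ v
  -- nonempty interior
  have hspanv : Submodule.span ℝ (Set.range fun j : Fin n => x j.succ - x 0) = ⊤ :=
    hx.span_eq_top_of_card_eq_finrank (by simp)
  have hvs : vectorSpan ℝ (Set.range x) = ⊤ := by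
    rw [eq_top_iff, ← hspanv]
    apply Submodule.span_le.mpr
    rintro _ ⟨j, rfl⟩
    exact vsub_mem_vectorSpan ℝ (Set.mem_range_self _) (Set.mem_range_self _)
  have haff : affineSpan ℝ (Set.range x) = ⊤ := by
    rw [AffineSubspace.affineSpan_eq_top_iff_vectorSpan_eq_top_of_nonempty ℝ (EuclideanSpace ℝ (Fin n))
      (EuclideanSpace ℝ (Fin n)) (Set.range_nonempty x)]
    exact hvs
  have hint : (interior s).Nonempty := by
    rw [hconv.interior_nonempty_iff_affineSpan_eq_top, hs, affineSpan_convexHull]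
    exact haff
  obtain ⟨b, hb⟩ := hint
  -- basic norm estimates
  set c := Finset.univ.sup' Finset.univ_nonempty fun k : Fin (n + 1) => ‖x k - x 0‖ with hc
  have hd : ∀ j, ‖x j - x 0‖ ≤ c := fun j =>
    Finset.le_sup' (fun k : Fin (n+1) => ‖x k - x 0‖) (Finset.mem_univ j)
  have hpx0 : p - x 0 = ∑ j, lam j • (x j - x 0) := by
    rw [hpl]
    rw [Finset.sum_congr rfl (fun j _ => smul_sub (lam j) (x j) (x 0)),
      Finset.sum_sub_distrib, ← Finset.sum_smul, hlam1, one_smul]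
  have hnp : ‖p - x 0‖ ≤ ∑ j, lam j * ‖x j - x 0‖ := by
    rw [hpx0]
    refine (norm_sum_le _ _).trans (le_of_eq (Finset.sum_congr rfl fun j _ => ?_))
    rw [norm_smul, Real.norm_eq_abs, abs_of_nonneg (hlam0 j)]
  have hsum_le_c : ∑ j, lam j * ‖x j - x 0‖ ≤ c := by
    calc ∑ j, lam j * ‖x j - x 0‖ ≤ ∑ j, lam j * c :=
          Finset.sum_le_sum fun j _ => mul_le_mul_of_nonneg_left (hd j) (hlam0 j)
      _ = c := by rw [← Finset.sum_mul, hlam1, one_mul]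
  have hsum_nonneg : 0 ≤ ∑ j, lam j * ‖x j - x 0‖ :=
    Finset.sum_nonneg fun j _ => mul_nonneg (hlam0 j) (norm_nonneg _)
  -- the key estimate for perturbed points
  have key : ∀ ε : ℝ, ε ∈ Ioo (0:ℝ) 1 →
      |g ((1-ε) • p + ε • b) - ∑ j, lam j * g ((1-ε) • (x j) + ε • b)| ≤
        (1 / 2) * β * n * ∑ j, lam j * ‖x j - x 0‖ * (c + ‖x j - x 0‖) := by
    intro ε hε
    have hmemT : ∀ z ∈ s, ((1-ε) • z + ε • b) ∈ interior s := fun z hz =>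
      hconv.combo_closure_interior_mem_interior (subset_closure hz) hb
        (by linarith [hε.2]) hε.1 (by ring)
    have hu0m := hmemT (x 0) (hxs 0)
    have hRb : ∀ z ∈ s, |g ((1-ε) • z + ε • b) - g ((1-ε) • (x 0) + ε • b) -
        fderiv ℝ g ((1-ε) • (x 0) + ε • b) ((1-ε) • (z - x 0))| ≤
        1/2 * (β * n * ‖z - x 0‖^2) := by
      intro z hz
      have hdiff : ((1-ε) • z + ε • b) - ((1-ε) • (x 0) + ε • b) = (1-ε) • (z - x 0) := by
        module
      have hh := taylor_remainder n s hconv g hg β hβ2 hu0m (hmemT z hz)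
      rw [hdiff] at hh
      refine hh.trans ?_
      have h2 : ‖(1-ε) • (z - x 0)‖^2 ≤ ‖z - x 0‖^2 := by
        rw [norm_smul, Real.norm_eq_abs, abs_of_nonneg (by linarith [hε.2]), mul_pow]
        have h1 : (1-ε)^2 ≤ 1 := by nlinarith [hε.1, hε.2]
        calc (1-ε)^2 * ‖z - x 0‖^2 ≤ 1 * ‖z - x 0‖^2 :=
              mul_le_mul_of_nonneg_right h1 (sq_nonneg _)
          _ = ‖z - x 0‖^2 := one_mul _
      have hβn : (0:ℝ) ≤ β * n := mul_nonneg hβ0 (Nat.cast_nonneg n)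
      nlinarith [mul_le_mul_of_nonneg_left h2 hβn]
    have hlin : ∑ j, lam j * fderiv ℝ g ((1-ε) • (x 0) + ε • b) ((1-ε) • (x j - x 0)) =
        fderiv ℝ g ((1-ε) • (x 0) + ε • b) ((1-ε) • (p - x 0)) := by
      rw [hpx0, Finset.smul_sum, map_sum]
      refine (Finset.sum_congr rfl fun j _ => ?_).symm
      rw [smul_comm, map_smul, smul_eq_mul]
    have hiden : g ((1-ε) • p + ε • b) - ∑ j, lam j * g ((1-ε) • (x j) + ε • b) =
        (g ((1-ε) • p + ε • b) - g ((1-ε) • (x 0) + ε • b) -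
          fderiv ℝ g ((1-ε) • (x 0) + ε • b) ((1-ε) • (p - x 0))) -
        ∑ j, lam j * (g ((1-ε) • (x j) + ε • b) - g ((1-ε) • (x 0) + ε • b) -
          fderiv ℝ g ((1-ε) • (x 0) + ε • b) ((1-ε) • (x j - x 0))) := by
      have hterm : ∀ j, lam j * (g ((1-ε) • (x j) + ε • b) - g ((1-ε) • (x 0) + ε • b) -
          fderiv ℝ g ((1-ε) • (x 0) + ε • b) ((1-ε) • (x j - x 0))) =
          lam j * g ((1-ε) • (x j) + ε • b) -
          lam j * g ((1-ε) • (x 0) + ε • b) -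
          lam j * fderiv ℝ g ((1-ε) • (x 0) + ε • b) ((1-ε) • (x j - x 0)) := fun j => by
        ring
      rw [Finset.sum_congr rfl (fun j _ => hterm j), Finset.sum_sub_distrib,
        Finset.sum_sub_distrib, ← Finset.sum_mul, hlam1, one_mul, hlin]
      ring
    rw [hiden]
    have hbound : |(g ((1-ε) • p + ε • b) - g ((1-ε) • (x 0) + ε • b) -
          fderiv ℝ g ((1-ε) • (x 0) + ε • b) ((1-ε) • (p - x 0))) -
        ∑ j, lam j * (g ((1-ε) • (x j) + ε • b) - g ((1-ε) • (x 0) + ε • b) -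
          fderiv ℝ g ((1-ε) • (x 0) + ε • b) ((1-ε) • (x j - x 0)))| ≤
        1/2 * (β * n * ‖p - x 0‖^2) + ∑ j, lam j * (1/2 * (β * n * ‖x j - x 0‖^2)) := by
      refine (abs_sub _ _).trans (add_le_add (hRb p hp) ?_)
      refine (Finset.abs_sum_le_sum_abs _ _).trans (Finset.sum_le_sum fun j _ => ?_)
      rw [abs_mul, abs_of_nonneg (hlam0 j)]
      exact mul_le_mul_of_nonneg_left (hRb (x j) (hxs j)) (hlam0 j)
    refine hbound.trans ?_
    -- final arithmetic
    have hA : ‖p - x 0‖^2 ≤ c * ∑ j, lam j * ‖x j - x 0‖ := by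
      calc ‖p - x 0‖^2 ≤ (∑ j, lam j * ‖x j - x 0‖)^2 := by
            apply sq_le_sq' _ hnp
            nlinarith [norm_nonneg (p - x 0)]
        _ ≤ c * ∑ j, lam j * ‖x j - x 0‖ := by
            rw [sq]
            exact mul_le_mul_of_nonneg_right hsum_le_c hsum_nonneg
    have hrhs : (1 / 2) * β * n * ∑ j, lam j * ‖x j - x 0‖ * (c + ‖x j - x 0‖) =
        1/2 * (β * n * (c * ∑ j, lam j * ‖x j - x 0‖)) +
          ∑ j, lam j * (1/2 * (β * n * ‖x j - x 0‖^2)) := by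
      simp only [Finset.mul_sum]
      rw [← Finset.sum_add_distrib]
      refine Finset.sum_congr rfl fun j _ => by ring
    rw [hrhs]
    have : 1/2 * (β * n * ‖p - x 0‖^2) ≤ 1/2 * (β * n * (c * ∑ j, lam j * ‖x j - x 0‖)) := by
      have hβn : (0:ℝ) ≤ β * n := mul_nonneg hβ0 (Nat.cast_nonneg n)
      nlinarith [mul_le_mul_of_nonneg_left hA hβn]
    linarith
  -- pass to the limit ε → 0⁺
  have hev : Ioo (0:ℝ) 1 ∈ nhdsWithin (0:ℝ) (Ioi 0) :=
    Ioo_mem_nhdsGT_of_mem ⟨le_rfl, zero_lt_one⟩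
  have hcont : ∀ z ∈ s, Filter.Tendsto (fun ε : ℝ => g ((1-ε) • z + ε • b))
      (nhdsWithin (0:ℝ) (Ioi 0)) (nhds (g z)) := by
    intro z hz
    have h1 : Filter.Tendsto (fun ε : ℝ => (1-ε) • z + ε • b) (nhds (0:ℝ)) (nhds z) := by
      have hcts : Continuous (fun ε : ℝ => (1-ε) • z + ε • b) := by
        apply Continuous.add
        · exact (continuous_const.sub continuous_id).smul continuous_const
        · exact continuous_id.smul continuous_const
      have := hcts.tendsto 0
      simpa using this
    have h2 : Filter.Tendsto (fun ε : ℝ => (1-ε) • z + ε • b)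
        (nhdsWithin (0:ℝ) (Ioi 0)) (nhdsWithin z s) := by
      rw [tendsto_nhdsWithin_iff]
      constructor
      · exact h1.mono_left nhdsWithin_le_nhds
      · filter_upwards [hev] with ε hε
        exact interior_subset (hconv.combo_closure_interior_mem_interior
          (subset_closure hz) hb (by linarith [hε.2]) hε.1 (by ring))
    exact ((hg.continuousOn z hz).tendsto).comp h2
  have hFt : Filter.Tendsto
      (fun ε : ℝ => |g ((1-ε) • p + ε • b) - ∑ j, lam j * g ((1-ε) • (x j) + ε • b)|)
      (nhdsWithin (0:ℝ) (Ioi 0)) (nhds |g p - ∑ j, lam j * g (x j)|) := by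
    apply Filter.Tendsto.abs
    exact (hcont p hp).sub (tendsto_finset_sum _ fun j _ =>
      tendsto_const_nhds.mul (hcont (x j) (hxs j)))
  refine le_of_tendsto hFt ?_
  filter_upwards [hev] with ε hε
  exact key ε hε
end

section
/- Let V be affine on an n-simplex σ = conv{x_0,...,x_n} with gradient w, let f: σ → ℝ^n be C² with all second partials of each component bounded by β, and suppose ‖w‖₁ ≤ l. If for each vertex x_j, wᵀ f(x_j) + (1/2) c_j β l ≤ -‖x_j‖₂, where c_j = n ‖x_j - x_0‖₂ (max_k ‖x_k - x_0‖₂ + ‖x_j - x_0‖₂), then wᵀ f(x) ≤ -‖x‖₂ for all x ∈ σ. -/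
open scoped BigOperators
open Set Filter Topology

set_option maxHeartbeats 1600000

private lemma taylor1d_s11 {g g' g'' : ℝ → ℝ} {M : ℝ}
    (hg : ∀ t ∈ Icc (0:ℝ) 1, HasDerivAt g (g' t) t)
    (hg' : ∀ t ∈ Icc (0:ℝ) 1, HasDerivAt g' (g'' t) t)
    (hM : ∀ t ∈ Icc (0:ℝ) 1, |g'' t| ≤ M) :
    |g 1 - g 0 - g' 0| ≤ M / 2 := by
  have hlip : ∀ t ∈ Icc (0:ℝ) 1, |g' t - g' 0| ≤ M * t := by
    have := norm_image_sub_le_of_norm_deriv_le_segment'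
      (f := g') (f' := g'') (C := M) (a := (0:ℝ)) (b := 1)
      (fun x hx => (hg' x hx).hasDerivWithinAt)
      (fun x hx => hM x (Ico_subset_Icc_self hx))
    intro t ht
    simpa [Real.norm_eq_abs] using this t ht
  have key : ∀ s : ℝ, s = 1 ∨ s = -1 →
      s * (g 1 - g 0 - g' 0) ≤ M / 2 := by
    intro s hs
    set φ : ℝ → ℝ := fun t => s * (g t - t * g' 0) - M / 2 * t ^ 2 with hφ
    have hφd : ∀ t ∈ Icc (0:ℝ) 1,
        HasDerivAt φ (s * (g' t - g' 0) - M * t) t := by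
      intro t ht
      have h1 : HasDerivAt (fun t : ℝ => g t - t * g' 0) (g' t - g' 0) t :=
        (hg t ht).sub (by simpa using (hasDerivAt_id t).mul_const (g' 0))
      have h2 : HasDerivAt (fun t : ℝ => M / 2 * t ^ 2) (M / 2 * (2 * t)) t := by
        simpa using ((hasDerivAt_pow 2 t).const_mul (M / 2))
      have := (h1.const_mul s).sub h2
      have e : s * (g' t - g' 0) - M * t = s * (g' t - g' 0) - M / 2 * (2 * t) := by ring
      rw [e]; exact this
    have hanti : AntitoneOn φ (Icc (0:ℝ) 1) := by
      apply antitoneOn_of_deriv_nonpos (convex_Icc 0 1)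
      · exact fun t ht => (hφd t ht).continuousAt.continuousWithinAt
      · intro t ht
        rw [interior_Icc] at ht
        exact ((hφd t (Ioo_subset_Icc_self ht)).differentiableAt).differentiableWithinAt
      · intro t ht
        rw [interior_Icc] at ht
        rw [(hφd t (Ioo_subset_Icc_self ht)).deriv]
        have h1 : s * (g' t - g' 0) ≤ |g' t - g' 0| := by
          rcases hs with rfl | rfl
          · rw [one_mul]; exact le_abs_self _
          · rw [neg_one_mul]; exact neg_le_abs _
        have h2 := hlip t (Ioo_subset_Icc_self ht)
        linarith
    have := hanti (left_mem_Icc.2 zero_le_one) (right_mem_Icc.2 zero_le_one) zero_le_one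
    simp only [hφ] at this
    rcases hs with rfl | rfl <;> [skip; skip] <;> nlinarith [this]
  have h1 := key 1 (Or.inl rfl)
  have h2 := key (-1) (Or.inr rfl)
  rw [abs_le]; constructor <;> linarith

private lemma decomp {n : ℕ} (v : EuclideanSpace ℝ (Fin n)) :
    v = ∑ i, v i • EuclideanSpace.single i (1:ℝ) := by
  ext j
  rw [WithLp.ofLp_sum, Finset.sum_apply]
  simp [EuclideanSpace.single_apply]

private lemma taylor_seg {n : ℕ} {U : Set (EuclideanSpace ℝ (Fin n))}
    (hU : IsOpen U) (hUc : Convex ℝ U)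
    {F : EuclideanSpace ℝ (Fin n) → ℝ} (hF : ∀ z ∈ U, ContDiffAt ℝ 2 F z)
    {β : ℝ} (hβ0 : 0 ≤ β)
    (hβ : ∀ q r : Fin n, ∀ ξ ∈ U,
      |fderiv ℝ (fun z => fderiv ℝ F z (EuclideanSpace.single q 1)) ξ
        (EuclideanSpace.single r 1)| ≤ β)
    {a b : EuclideanSpace ℝ (Fin n)} (ha : a ∈ U) (hb : b ∈ U) :
    |F b - F a - fderiv ℝ F a (b - a)| ≤ n * β * ‖b - a‖ ^ 2 / 2 := by
  set v := b - a with hv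
  set γ : ℝ → EuclideanSpace ℝ (Fin n) := fun t => a + t • v with hγdef
  have hγmem : ∀ t ∈ Icc (0:ℝ) 1, γ t ∈ U := fun t ht => hUc.add_smul_sub_mem ha hb ht
  have hγd : ∀ t : ℝ, HasDerivAt γ v t := by
    intro t
    have := ((hasDerivAt_id t).smul_const v).const_add a; rw [one_smul] at this; exact this
  -- the bilinear second derivative
  set D : EuclideanSpace ℝ (Fin n) →
      (EuclideanSpace ℝ (Fin n) →L[ℝ] (EuclideanSpace ℝ (Fin n) →L[ℝ] ℝ)) :=
    fun ξ => fderiv ℝ (fderiv ℝ F) ξ with hD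
  have hFd1 : ∀ ξ ∈ U, DifferentiableAt ℝ F ξ := fun ξ hξ =>
    (hF ξ hξ).differentiableAt (by norm_num)
  have hfdC : ∀ ξ ∈ U, ContDiffAt ℝ 1 (fderiv ℝ F) ξ := fun ξ hξ =>
    (hF ξ hξ).fderiv_right (by norm_num)
  have hfdD : ∀ ξ ∈ U, DifferentiableAt ℝ (fderiv ℝ F) ξ := fun ξ hξ =>
    (hfdC ξ hξ).differentiableAt (by norm_num)
  -- hβ in terms of D
  have hβD : ∀ q r : Fin n, ∀ ξ ∈ U,
      |D ξ (EuclideanSpace.single r 1) (EuclideanSpace.single q 1)| ≤ β := by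
    intro q r ξ hξ
    have heq : fderiv ℝ (fun z => fderiv ℝ F z (EuclideanSpace.single q 1)) ξ
        (EuclideanSpace.single r 1) = D ξ (EuclideanSpace.single r 1) (EuclideanSpace.single q 1) := by
      have h1 : HasFDerivAt (fun z => fderiv ℝ F z (EuclideanSpace.single q (1:ℝ)))
          ((ContinuousLinearMap.apply ℝ ℝ (EuclideanSpace.single q (1:ℝ))).comp (D ξ)) ξ :=
        (ContinuousLinearMap.apply ℝ ℝ (EuclideanSpace.single q (1:ℝ))).hasFDerivAt.comp ξ
          (hfdD ξ hξ).hasFDerivAt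
      rw [h1.fderiv]
      rfl
    rw [← heq]; exact hβ q r ξ hξ
  -- pointwise bound for D ξ v v
  have hbound : ∀ ξ ∈ U, |D ξ v v| ≤ β * (∑ i, |v i|) ^ 2 := by
    intro ξ hξ
    have e1 : ∀ (L : EuclideanSpace ℝ (Fin n) →L[ℝ] ℝ),
        L v = ∑ q, v q * L (EuclideanSpace.single q 1) := by
      intro L
      conv_lhs => rw [decomp v]
      rw [map_sum]
      exact Finset.sum_congr rfl fun q _ => by rw [map_smul]; rfl
    have hDv : D ξ v = ∑ r, v r • D ξ (EuclideanSpace.single r 1) := by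
      conv_lhs => rw [decomp v]
      rw [map_sum]
      exact Finset.sum_congr rfl fun r _ => map_smul _ _ _
    have hexp : D ξ v v = ∑ r, ∑ q, v r * v q * (D ξ (EuclideanSpace.single r 1) (EuclideanSpace.single q 1)) := by
      rw [hDv, ContinuousLinearMap.sum_apply]
      refine Finset.sum_congr rfl fun r _ => ?_
      rw [ContinuousLinearMap.smul_apply, smul_eq_mul,
        e1 (D ξ (EuclideanSpace.single r 1)), Finset.mul_sum]
      exact Finset.sum_congr rfl fun q _ => by ring
    rw [hexp]
    calc |∑ r, ∑ q, v r * v q * _| ≤ ∑ r, ∑ q, |v r * v q * (D ξ (EuclideanSpace.single r 1) (EuclideanSpace.single q 1))| := by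
          exact (Finset.abs_sum_le_sum_abs _ _).trans (Finset.sum_le_sum fun r _ => Finset.abs_sum_le_sum_abs _ _)
      _ ≤ ∑ r, ∑ q, |v r| * |v q| * β := by
          refine Finset.sum_le_sum fun r _ => Finset.sum_le_sum fun q _ => ?_
          rw [abs_mul, abs_mul]
          exact mul_le_mul_of_nonneg_left (hβD q r ξ hξ) (mul_nonneg (abs_nonneg _) (abs_nonneg _))
      _ = β * (∑ i, |v i|) ^ 2 := by
          rw [sq, Finset.sum_mul_sum]
          rw [Finset.mul_sum]
          refine Finset.sum_congr rfl fun r _ => ?_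
          rw [Finset.mul_sum]
          refine Finset.sum_congr rfl fun q _ => ?_
          ring
  -- set up 1D functions
  set g : ℝ → ℝ := fun t => F (γ t) with hg
  set g' : ℝ → ℝ := fun t => fderiv ℝ F (γ t) v with hg'
  set g'' : ℝ → ℝ := fun t => D (γ t) v v with hg''
  have hgd : ∀ t ∈ Icc (0:ℝ) 1, HasDerivAt g (g' t) t := fun t ht =>
    ((hFd1 _ (hγmem t ht)).hasFDerivAt).comp_hasDerivAt t (hγd t)
  have hgd' : ∀ t ∈ Icc (0:ℝ) 1, HasDerivAt g' (g'' t) t := by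
    intro t ht
    have h1 : HasFDerivAt (fun z => fderiv ℝ F z v)
        ((ContinuousLinearMap.apply ℝ ℝ v).comp (D (γ t))) (γ t) :=
      (ContinuousLinearMap.apply ℝ ℝ v).hasFDerivAt.comp _ (hfdD _ (hγmem t ht)).hasFDerivAt
    exact h1.comp_hasDerivAt t (hγd t)
  have hM : ∀ t ∈ Icc (0:ℝ) 1, |g'' t| ≤ β * (∑ i, |v i|) ^ 2 := fun t ht =>
    hbound _ (hγmem t ht)
  have h := taylor1d_s11 hgd hgd' hM
  have hγ0 : γ 0 = a := by simp [hγdef]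
  have hγ1 : γ 1 = b := by simp [hγdef, hv]
  have hg1 : g 1 = F b := by show F (γ 1) = F b; rw [hγ1]
  have hg0 : g 0 = F a := by show F (γ 0) = F a; rw [hγ0]
  have hg'0 : g' 0 = fderiv ℝ F a v := by
    show fderiv ℝ F (γ 0) v = _; rw [hγ0]
  rw [hg1, hg0, hg'0] at h
  have hfin : (∑ i, |v i|) ^ 2 ≤ n * ‖v‖ ^ 2 := by
    have hcs := sq_sum_le_card_mul_sum_sq (s := Finset.univ) (f := fun i => |v i|)
    simp only [Finset.card_univ, Fintype.card_fin, sq_abs] at hcs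
    have hnorm : ‖v‖ ^ 2 = ∑ i, v i ^ 2 := by
      rw [EuclideanSpace.norm_eq]
      rw [Real.sq_sqrt (by positivity)]
      simp [sq_abs]
    rw [hnorm]
    exact_mod_cast hcs
  refine h.trans ?_
  have h2 : β * (∑ i, |v i|) ^ 2 ≤ β * (n * ‖v‖ ^ 2) := mul_le_mul_of_nonneg_left hfin hβ0
  nlinarith

private lemma interp {n : ℕ} {U : Set (EuclideanSpace ℝ (Fin n))}
    (hU : IsOpen U) (hUc : Convex ℝ U)
    {F : EuclideanSpace ℝ (Fin n) → ℝ} (hF : ∀ z ∈ U, ContDiffAt ℝ 2 F z)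
    {β : ℝ} (hβ0 : 0 ≤ β)
    (hβ : ∀ q r : Fin n, ∀ ξ ∈ U,
      |fderiv ℝ (fun z => fderiv ℝ F z (EuclideanSpace.single q 1)) ξ
        (EuclideanSpace.single r 1)| ≤ β)
    (y : Fin (n+1) → EuclideanSpace ℝ (Fin n)) (hy : ∀ j, y j ∈ U)
    (μ : Fin (n+1) → ℝ) (hμ0 : ∀ j, 0 ≤ μ j) (hμ1 : ∑ j, μ j = 1) :
    |F (∑ j, μ j • y j) - ∑ j, μ j * F (y j)| ≤
      1 / 2 * β * ∑ j, μ j * (n * ‖y j - y 0‖ *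
        ((Finset.univ.sup' Finset.univ_nonempty fun k : Fin (n+1) => ‖y k - y 0‖) +
          ‖y j - y 0‖)) := by
  set P : EuclideanSpace ℝ (Fin n) := ∑ j, μ j • y j with hP
  have hPU : P ∈ U := hUc.sum_mem (fun j _ => hμ0 j) hμ1 (fun j _ => hy j)
  set L := fderiv ℝ F (y 0) with hLdef
  set R : EuclideanSpace ℝ (Fin n) → ℝ := fun z => F z - F (y 0) - L (z - y 0) with hR
  have hRb : ∀ z ∈ U, |R z| ≤ n * β * ‖z - y 0‖ ^ 2 / 2 := fun z hz =>
    taylor_seg hU hUc hF hβ0 hβ (hy 0) hz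
  have hPy0 : P - y 0 = ∑ j, μ j • (y j - y 0) := by
    simp only [smul_sub]
    rw [Finset.sum_sub_distrib, ← Finset.sum_smul, hμ1, one_smul]
  have hL : L (P - y 0) = ∑ j, μ j * L (y j - y 0) := by
    rw [hPy0, map_sum]
    exact Finset.sum_congr rfl fun j _ => by rw [map_smul]; rfl
  have hid : F P - ∑ j, μ j * F (y j) = R P - ∑ j, μ j * R (y j) := by
    have h1 : ∑ j, μ j * F (y j)
        = ∑ j, μ j * R (y j) + F (y 0) + L (P - y 0) := by
      rw [hL]
      have : ∀ j, μ j * F (y j) = μ j * R (y j) + μ j * F (y 0) + μ j * L (y j - y 0) := by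
        intro j; simp only [hR]; ring
      rw [Finset.sum_congr rfl fun j _ => this j, Finset.sum_add_distrib,
        Finset.sum_add_distrib, ← Finset.sum_mul, hμ1, one_mul]
    have h2 : F P = R P + F (y 0) + L (P - y 0) := by simp only [hR]; ring
    rw [h1, h2]; ring
  rw [hid]
  set M := Finset.univ.sup' Finset.univ_nonempty fun k : Fin (n+1) => ‖y k - y 0‖ with hM
  have hMle : ∀ j, ‖y j - y 0‖ ≤ M := fun j => by
    exact Finset.le_sup' (fun k : Fin (n+1) => ‖y k - y 0‖) (Finset.mem_univ j)
  have hM0 : 0 ≤ M := le_trans (by simp) (hMle 0)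
  set S := ∑ j, μ j * ‖y j - y 0‖ with hS
  have hS0 : 0 ≤ S := Finset.sum_nonneg fun j _ => mul_nonneg (hμ0 j) (norm_nonneg _)
  have hSM : S ≤ M := by
    calc S ≤ ∑ j, μ j * M := Finset.sum_le_sum fun j _ =>
            mul_le_mul_of_nonneg_left (hMle j) (hμ0 j)
      _ = M := by rw [← Finset.sum_mul, hμ1, one_mul]
  have hPnorm : ‖P - y 0‖ ≤ S := by
    rw [hPy0]
    refine (norm_sum_le _ _).trans ?_
    refine Finset.sum_le_sum fun j _ => ?_
    rw [norm_smul, Real.norm_eq_abs, abs_of_nonneg (hμ0 j)]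
  have hstep : |R P - ∑ j, μ j * R (y j)| ≤
      n * β * ‖P - y 0‖ ^ 2 / 2 + ∑ j, μ j * (n * β * ‖y j - y 0‖ ^ 2 / 2) := by
    refine (abs_sub _ _).trans ?_
    gcongr
    · exact hRb P hPU
    refine (Finset.abs_sum_le_sum_abs _ _).trans ?_
    refine Finset.sum_le_sum fun j _ => ?_
    rw [abs_mul, abs_of_nonneg (hμ0 j)]
    exact mul_le_mul_of_nonneg_left (hRb (y j) (hy j)) (hμ0 j)
  refine hstep.trans ?_
  have hP2 : ‖P - y 0‖ ^ 2 ≤ S * M := by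
    nlinarith [norm_nonneg (P - y 0), hPnorm, hSM, hS0]
  have hterm : ∀ j : Fin (n+1), 1 / 2 * β * (μ j * ((n:ℝ) * ‖y j - y 0‖ * (M + ‖y j - y 0‖)))
      = (n * β * M / 2) * (μ j * ‖y j - y 0‖) + μ j * ((n:ℝ) * β * ‖y j - y 0‖ ^ 2 / 2) :=
    fun j => by ring
  have hrhs : 1 / 2 * β * ∑ j, μ j * ((n:ℝ) * ‖y j - y 0‖ * (M + ‖y j - y 0‖))
      = n * β * (S * M) / 2 + ∑ j, μ j * ((n:ℝ) * β * ‖y j - y 0‖ ^ 2 / 2) := by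
    rw [Finset.mul_sum, Finset.sum_congr rfl (fun j _ => hterm j), Finset.sum_add_distrib,
      ← Finset.mul_sum, ← hS]
    ring
  rw [hrhs]
  have hmono : (n:ℝ) * β * ‖P - y 0‖ ^ 2 / 2 ≤ (n:ℝ) * β * (S * M) / 2 := by
    have hnb : 0 ≤ (n:ℝ) * β := mul_nonneg (Nat.cast_nonneg n) hβ0
    have := mul_le_mul_of_nonneg_left hP2 hnb
    linarith
  exact add_le_add hmono le_rfl

/-- Core CPA synthesis lemma: if the strict decrease conditions with error
terms `c j` hold at all vertices of a simplex, then `wᵀ f(x) ≤ -‖x‖` for all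
`x` in the simplex. -/
theorem stmt11 (n : ℕ) (x : Fin (n + 1) → EuclideanSpace ℝ (Fin n))
    (hx : LinearIndependent ℝ (fun j : Fin n => x j.succ - x 0))
    (f : EuclideanSpace ℝ (Fin n) → EuclideanSpace ℝ (Fin n))
    (hf : ∀ p : Fin n, ContDiffOn ℝ 2 (fun z => f z p) (convexHull ℝ (Set.range x)))
    (β : ℝ)
    (hβ : ∀ p q r : Fin n, ∀ ξ ∈ convexHull ℝ (Set.range x),
      |fderiv ℝ (fun z => fderiv ℝ (fun y => f y p) z (EuclideanSpace.single q 1)) ξ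
        (EuclideanSpace.single r 1)| ≤ β)
    (w : Fin n → ℝ) (l : ℝ) (hw : ∑ k, |w k| ≤ l)
    (c : Fin (n + 1) → ℝ)
    (hc : ∀ j, c j = n * ‖x j - x 0‖ *
      ((Finset.univ.sup' Finset.univ_nonempty fun k : Fin (n + 1) => ‖x k - x 0‖) +
        ‖x j - x 0‖))
    (hvert : ∀ j, (∑ k, w k * f (x j) k) + (1 / 2) * c j * β * l ≤ -‖x j‖) :
    ∀ p ∈ convexHull ℝ (Set.range x), (∑ k, w k * f p k) ≤ -‖p‖ := by
  intro p hp
  have hxH : ∀ j, x j ∈ convexHull ℝ (Set.range x) :=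
    fun j => subset_convexHull ℝ _ ⟨j, rfl⟩
  rcases Nat.eq_zero_or_pos n with hn0 | hn
  · subst hn0
    have hsub : convexHull ℝ (Set.range x) ⊆ {x 0} := by
      refine convexHull_min ?_ (convex_singleton _)
      rintro - ⟨j, rfl⟩
      simp [Fin.eq_zero j]
    have hpx : p = x 0 := hsub hp
    have h0 := hvert 0
    have hc0 : c 0 = 0 := by rw [hc 0]; simp
    rw [hc0] at h0
    simp only [Finset.univ_eq_empty, Finset.sum_empty] at h0 ⊢
    rw [hpx]
    linarith
  -- main case : n ≥ 1
  have hβ0 : 0 ≤ β := le_trans (abs_nonneg _) (hβ ⟨0, hn⟩ ⟨0, hn⟩ ⟨0, hn⟩ (x 0) (hxH 0))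
  have hl0 : 0 ≤ l := le_trans (Finset.sum_nonneg fun k _ => abs_nonneg _) hw
  have hMle : ∀ j, ‖x j - x 0‖ ≤
      Finset.univ.sup' Finset.univ_nonempty fun k : Fin (n+1) => ‖x k - x 0‖ := fun j =>
    Finset.le_sup' (fun k : Fin (n+1) => ‖x k - x 0‖) (Finset.mem_univ j)
  have hM0 : 0 ≤ Finset.univ.sup' Finset.univ_nonempty fun k : Fin (n+1) => ‖x k - x 0‖ :=
    le_trans (norm_nonneg _) (hMle 0)
  have hcnn : ∀ j, 0 ≤ c j := fun j => by
    rw [hc j]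
    have := norm_nonneg (x j - x 0)
    positivity
  -- interior of the hull is nonempty
  have haff : AffineIndependent ℝ x := by
    rw [affineIndependent_iff_linearIndependent_vsub ℝ x 0]
    have hinj : Function.Injective
        (fun i : {i : Fin (n+1) // i ≠ (0 : Fin (n+1))} => (i : Fin (n+1)).pred i.2) := by
      rintro ⟨i, hi⟩ ⟨j, hj⟩ h
      simp only at h
      exact Subtype.ext (by rwa [Fin.pred_inj] at h)
    have h2 := hx.comp _ hinj
    convert h2 using 1
    funext i
    simp [Function.comp, Fin.succ_pred, vsub_eq_sub]
    exact rfl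
  have hspan : affineSpan ℝ (Set.range x) = ⊤ := by
    rw [haff.affineSpan_eq_top_iff_card_eq_finrank_add_one]
    simp [finrank_euclideanSpace_fin]
  have hint : (interior (convexHull ℝ (Set.range x))).Nonempty := by
    rw [(convex_convexHull ℝ _).interior_nonempty_iff_affineSpan_eq_top, affineSpan_convexHull]
    exact hspan
  obtain ⟨b, hb⟩ := hint
  -- representation of p as a convex combination of vertices
  have hp' := hp
  rw [convexHull_range_eq_exists_affineCombination] at hp'
  obtain ⟨s, wgt, hw0, hw1, hps⟩ := hp'
  set μ : Fin (n+1) → ℝ := fun j => if j ∈ s then wgt j else 0 with hμdef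
  have hμ0 : ∀ j, 0 ≤ μ j := fun j => by
    by_cases h : j ∈ s <;> simp [hμdef, h] <;> exact hw0 j h
  have hμ1 : ∑ j, μ j = 1 := by
    simp only [hμdef]
    rw [Finset.sum_ite_mem, Finset.univ_inter]
    exact hw1
  have hpsum : ∑ j, μ j • x j = p := by
    rw [← hps, Finset.affineCombination_eq_linear_combination s x wgt hw1]
    simp only [hμdef, ite_smul, zero_smul]
    rw [Finset.sum_ite_mem, Finset.univ_inter]
  -- the approximating sequences
  set ε : ℕ → ℝ := fun m => 1 / (m + 1) with hεdef
  have hε0 : ∀ m, 0 < ε m := fun m => by positivity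
  have hε1 : ∀ m, ε m ≤ 1 := fun m => by
    rw [hεdef]
    rw [div_le_one (by positivity)]
    simp
  set y : ℕ → Fin (n+1) → EuclideanSpace ℝ (Fin n) :=
    fun m j => (1 - ε m) • x j + ε m • b with hydef
  have hyU : ∀ m j, y m j ∈ interior (convexHull ℝ (Set.range x)) := by
    intro m j
    have := (convex_convexHull ℝ (Set.range x)).combo_interior_closure_mem_interior
      (a := ε m) (b := 1 - ε m) hb
      (subset_closure (hxH j)) (hε0 m) (by linarith [hε1 m]) (by ring)
    simpa [hydef, add_comm] using this
  set P : ℕ → EuclideanSpace ℝ (Fin n) := fun m => ∑ j, μ j • y m j with hPdef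
  have hPU : ∀ m, P m ∈ interior (convexHull ℝ (Set.range x)) := fun m =>
    ((convex_convexHull ℝ (Set.range x)).interior).sum_mem
      (fun j _ => hμ0 j) hμ1 (fun j _ => hyU m j)
  set G : EuclideanSpace ℝ (Fin n) → ℝ := fun z => ∑ k, w k * f z k with hGdef
  have hGc : ContinuousOn G (convexHull ℝ (Set.range x)) :=
    continuousOn_finset_sum _ fun k _ => continuousOn_const.mul (hf k).continuousOn
  set E0 : ℝ := 1 / 2 * β * ∑ j, μ j * c j with hE0def
  have hE0nn : 0 ≤ E0 := by
    rw [hE0def]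
    have : 0 ≤ ∑ j, μ j * c j :=
      Finset.sum_nonneg fun j _ => mul_nonneg (hμ0 j) (hcnn j)
    positivity
  -- the key inequality at each stage m
  have hkey : ∀ m, G (P m) ≤ (∑ j, μ j * G (y m j)) + l * E0 := by
    intro m
    -- componentwise interpolation error bound
    have hcomp : ∀ k : Fin n, |f (P m) k - ∑ j, μ j * f (y m j) k| ≤ E0 := by
      intro k
      have hF : ∀ z ∈ interior (convexHull ℝ (Set.range x)),
          ContDiffAt ℝ 2 (fun z => f z k) z := fun z hz =>
        (hf k).contDiffAt (mem_nhds_iff.2 ⟨_, interior_subset, isOpen_interior, hz⟩)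
      have hβ' : ∀ q r : Fin n, ∀ ξ ∈ interior (convexHull ℝ (Set.range x)),
          |fderiv ℝ (fun z => fderiv ℝ (fun z => f z k) z (EuclideanSpace.single q 1)) ξ
            (EuclideanSpace.single r 1)| ≤ β := fun q r ξ hξ =>
        hβ k q r ξ (interior_subset hξ)
      have h1 := interp isOpen_interior ((convex_convexHull ℝ (Set.range x)).interior)
        hF hβ0 hβ' (y m) (hyU m) μ hμ0 hμ1
      refine h1.trans ?_
      rw [hE0def]
      have hfac : 0 ≤ 1 - ε m := by linarith [hε1 m]
      have hyd : ∀ j, y m j - y m 0 = (1 - ε m) • (x j - x 0) := by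
        intro j
        simp only [hydef, smul_sub]
        abel
      have hyn : ∀ j, ‖y m j - y m 0‖ = (1 - ε m) * ‖x j - x 0‖ := fun j => by
        rw [hyd j, norm_smul, Real.norm_eq_abs, abs_of_nonneg hfac]
      have hyle : ∀ j, ‖y m j - y m 0‖ ≤ ‖x j - x 0‖ := fun j => by
        rw [hyn j]
        nlinarith [norm_nonneg (x j - x 0), hε0 m]
      have hMy : (Finset.univ.sup' Finset.univ_nonempty fun k : Fin (n+1) => ‖y m k - y m 0‖)
          ≤ Finset.univ.sup' Finset.univ_nonempty fun k : Fin (n+1) => ‖x k - x 0‖ :=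
        Finset.sup'_le _ _ fun j _ => (hyle j).trans (hMle j)
      have hterm : ∀ j, μ j * ((n : ℝ) * ‖y m j - y m 0‖ *
          ((Finset.univ.sup' Finset.univ_nonempty fun k : Fin (n+1) => ‖y m k - y m 0‖)
            + ‖y m j - y m 0‖)) ≤ μ j * c j := by
        intro j
        refine mul_le_mul_of_nonneg_left ?_ (hμ0 j)
        rw [hc j]
        have h0 : (0:ℝ) ≤ (Finset.univ.sup' Finset.univ_nonempty
            fun k : Fin (n+1) => ‖y m k - y m 0‖) :=
          le_trans (norm_nonneg _) (Finset.le_sup' (fun k : Fin (n+1) => ‖y m k - y m 0‖)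
            (Finset.mem_univ 0))
        have hA : (n : ℝ) * ‖y m j - y m 0‖ ≤ (n : ℝ) * ‖x j - x 0‖ :=
          mul_le_mul_of_nonneg_left (hyle j) (Nat.cast_nonneg n)
        have hB : (Finset.univ.sup' Finset.univ_nonempty
              fun k : Fin (n+1) => ‖y m k - y m 0‖) + ‖y m j - y m 0‖
            ≤ (Finset.univ.sup' Finset.univ_nonempty
              fun k : Fin (n+1) => ‖x k - x 0‖) + ‖x j - x 0‖ :=
          add_le_add hMy (hyle j)
        have hC : (0:ℝ) ≤ (n : ℝ) * ‖x j - x 0‖ := by positivity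
        exact mul_le_mul hA hB (add_nonneg h0 (norm_nonneg _)) hC
      have := Finset.sum_le_sum (s := (Finset.univ : Finset (Fin (n+1)))) fun j _ => hterm j
      have hβhalf : (0:ℝ) ≤ 1 / 2 * β := by positivity
      exact mul_le_mul_of_nonneg_left this hβhalf
    -- combine the components with the weights w
    have hswap : ∑ j, μ j * G (y m j) = ∑ k, w k * ∑ j, μ j * f (y m j) k := by
      simp only [hGdef, Finset.mul_sum]
      rw [Finset.sum_comm]
      refine Finset.sum_congr rfl fun k _ => ?_
      exact Finset.sum_congr rfl fun j _ => by ring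
    have hdiff : |G (P m) - ∑ j, μ j * G (y m j)| ≤ l * E0 := by
      rw [hswap]
      have h1 : G (P m) - ∑ k, w k * ∑ j, μ j * f (y m j) k
          = ∑ k, w k * (f (P m) k - ∑ j, μ j * f (y m j) k) := by
        simp only [hGdef]
        rw [← Finset.sum_sub_distrib]
        exact Finset.sum_congr rfl fun k _ => by ring
      rw [h1]
      calc |∑ k, w k * (f (P m) k - ∑ j, μ j * f (y m j) k)|
          ≤ ∑ k, |w k * (f (P m) k - ∑ j, μ j * f (y m j) k)| :=
            Finset.abs_sum_le_sum_abs _ _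
        _ ≤ ∑ k, |w k| * E0 := by
            refine Finset.sum_le_sum fun k _ => ?_
            rw [abs_mul]
            exact mul_le_mul_of_nonneg_left (hcomp k) (abs_nonneg _)
        _ = (∑ k, |w k|) * E0 := by rw [Finset.sum_mul]
        _ ≤ l * E0 := mul_le_mul_of_nonneg_right hw hE0nn
    have := abs_le.1 hdiff
    linarith [this.2]
  -- pass to the limit m → ∞
  have htendε : Tendsto ε atTop (𝓝 0) := by
    exact tendsto_one_div_add_atTop_nhds_zero_nat
  have htendc : Tendsto (fun m => 1 - ε m) atTop (𝓝 1) := by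
    simpa using tendsto_const_nhds.sub htendε
  have hty : ∀ j, Tendsto (fun m => y m j) atTop (𝓝 (x j)) := by
    intro j
    have := (htendc.smul_const (x j)).add (htendε.smul_const b)
    simpa [hydef] using this
  have htP : Tendsto P atTop (𝓝 p) := by
    rw [← hpsum]
    exact tendsto_finset_sum _ fun j _ => (hty j).const_smul (μ j)
  have hGP : Tendsto (fun m => G (P m)) atTop (𝓝 (G p)) := by
    refine (hGc p hp).tendsto.comp ?_
    exact tendsto_nhdsWithin_of_tendsto_nhds_of_eventually_within _ htP
      (Eventually.of_forall fun m => interior_subset (hPU m))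
  have hGy : ∀ j, Tendsto (fun m => G (y m j)) atTop (𝓝 (G (x j))) := by
    intro j
    refine (hGc (x j) (hxH j)).tendsto.comp ?_
    exact tendsto_nhdsWithin_of_tendsto_nhds_of_eventually_within _ (hty j)
      (Eventually.of_forall fun m => interior_subset (hyU m j))
  have hRHS : Tendsto (fun m => (∑ j, μ j * G (y m j)) + l * E0) atTop
      (𝓝 ((∑ j, μ j * G (x j)) + l * E0)) :=
    (tendsto_finset_sum _ fun j _ => (hGy j).const_mul (μ j)).add tendsto_const_nhds
  have hlim : G p ≤ (∑ j, μ j * G (x j)) + l * E0 :=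
    le_of_tendsto_of_tendsto' hGP hRHS hkey
  -- conclude using the vertex conditions
  have hsplit : (∑ j, μ j * G (x j)) + l * E0
      = ∑ j, μ j * (G (x j) + 1 / 2 * c j * β * l) := by
    rw [hE0def]
    rw [Finset.sum_congr rfl fun (j : Fin (n+1)) _ =>
      (mul_add (μ j) (G (x j)) (1 / 2 * c j * β * l)), Finset.sum_add_distrib]
    congr 1
    rw [Finset.mul_sum, Finset.mul_sum]
    exact Finset.sum_congr rfl fun j _ => by ring
  have hvert' : ∀ j, μ j * (G (x j) + 1 / 2 * c j * β * l) ≤ μ j * (-‖x j‖) := fun j =>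
    mul_le_mul_of_nonneg_left (hvert j) (hμ0 j)
  have hnorm : ∑ j, μ j * (-‖x j‖) ≤ -‖p‖ := by
    rw [← hpsum]
    have h1 : ‖∑ j, μ j • x j‖ ≤ ∑ j, μ j * ‖x j‖ := by
      refine (norm_sum_le _ _).trans ?_
      refine Finset.sum_le_sum fun j _ => ?_
      rw [norm_smul, Real.norm_eq_abs, abs_of_nonneg (hμ0 j)]
    have h2 : ∑ j, μ j * (-‖x j‖) = -∑ j, μ j * ‖x j‖ := by
      rw [← Finset.sum_neg_distrib]
      exact Finset.sum_congr rfl fun j _ => by ring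
    rw [h2]
    linarith
  have hfinal := (hlim.trans (le_of_eq hsplit)).trans
    ((Finset.sum_le_sum fun j _ => hvert' j).trans hnorm)
  simpa [hGdef] using hfinal
end
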